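/- arXiv:1809.07312 — 2 statements merged into one kernel-verified Lean document; each statement's English description precedes it below -/
import Mathlib

section
/- If A_u has all eigenvalues of modulus strictly greater than 1 and A_s has all eigenvalues of modulus strictly less than 1 and is invertible, then the matrix L = A + Q(A')^{-1}Y_∞ of the State-Secrecy Code has all eigenvalues of modulus strictly greater than 1; consequently, L^{-1} has spectral radius strictly less than 1. -/
/-!
With `A = diag(A_u, A_s)` and `Y_∞ = diag(0, P⁻¹)`, the matrix `L` is block upper triangular
with diagonal blocks `A_u` and `A_s + Q_s (A_sᵀ)⁻¹ P⁻¹`. The Lyapunov equation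
`P = A_s P A_sᵀ + Q_s` turns the second block into `P (A_sᵀ)⁻¹ P⁻¹`, which is similar to
`(A_sᵀ)⁻¹`; its eigenvalues are the inverses of those of `A_s`, hence of modulus `> 1`.
The eigenvalues of `L⁻¹` are in turn the inverses of those of `L`.
-/

open Matrix

/-- `A` is Schur stable: all (complex) eigenvalues have modulus `< 1`. -/
def SchurStable {m : Type*} [Fintype m] [DecidableEq m]
    (A : Matrix m m ℝ) : Prop :=
  ∀ μ ∈ spectrum ℂ (A.map (algebraMap ℝ ℂ)), ‖μ‖ < 1

/-- `A` is antistable: all (complex) eigenvalues have modulus `> 1`. -/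
def Antistable {m : Type*} [Fintype m] [DecidableEq m]
    (A : Matrix m m ℝ) : Prop :=
  ∀ μ ∈ spectrum ℂ (A.map (algebraMap ℝ ℂ)), 1 < ‖μ‖

namespace Matrix

variable {m n : Type*} [Fintype m] [DecidableEq m] [Fintype n] [DecidableEq n]

section Spectrum

variable {K : Type*} [Field K]

theorem spectrum_fromBlocks_zero₂₁ (A : Matrix m m K) (B : Matrix m n K) (D : Matrix n n K) :
    spectrum K (fromBlocks A B 0 D) = spectrum K A ∪ spectrum K D := by
  ext μ
  simp only [Set.mem_union, mem_spectrum_iff_isRoot_charpoly, charpoly_fromBlocks_zero₂₁,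
    Polynomial.root_mul]

theorem spectrum_transpose (A : Matrix m m K) : spectrum K Aᵀ = spectrum K A := by
  ext μ
  simp only [mem_spectrum_iff_isRoot_charpoly, charpoly_transpose]

theorem spectrum_nonsing_inv {A : Matrix m m K} (hA : IsUnit A.det) :
    spectrum K A⁻¹ = (spectrum K A)⁻¹ :=
  (spectrum.map_inv (nonsingInvUnit A hA)).symm

theorem spectrum_conj_nonsing_inv (A : Matrix m m K) {P : Matrix m m K} (hP : IsUnit P.det) :
    spectrum K (P * A * P⁻¹) = spectrum K A :=
  spectrum.units_conjugate (u := nonsingInvUnit P hP)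

end Spectrum

theorem map_nonsing_inv {R S : Type*} [CommRing R] [CommRing S] (f : R →+* S)
    {A : Matrix m m R} (hA : IsUnit A.det) : A⁻¹.map f = (A.map f)⁻¹ := by
  refine (inv_eq_left_inv ?_).symm
  rw [← Matrix.map_mul, nonsing_inv_mul _ hA, Matrix.map_one _ f.map_zero f.map_one]

theorem isUnit_det_map_iff {K L : Type*} [Field K] [Field L] (f : K →+* L) (A : Matrix m m K) :
    IsUnit (A.map f).det ↔ IsUnit A.det := by
  rw [← RingHom.mapMatrix_apply, ← RingHom.map_det, isUnit_map_iff]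

theorem add_mul_inv_transpose_mul_inv_eq_of_lyapunov {R : Type*} [CommRing R]
    {A P Q : Matrix m m R} (hA : IsUnit A.det) (hP : IsUnit P.det) (hLyap : P = A * P * Aᵀ + Q) :
    A + Q * (Aᵀ)⁻¹ * P⁻¹ = P * (Aᵀ)⁻¹ * P⁻¹ := by
  have hAT : IsUnit Aᵀ.det := by rwa [det_transpose]
  have hQ : Q = P - A * P * Aᵀ := eq_sub_of_add_eq' hLyap.symm
  rw [hQ, Matrix.sub_mul, Matrix.sub_mul, Matrix.mul_assoc (A * P), mul_nonsing_inv _ hAT,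
    Matrix.mul_one, Matrix.mul_assoc A, mul_nonsing_inv _ hP, Matrix.mul_one, add_sub_cancel]

theorem fromBlocks_add_mul_inv_transpose_mul_fromBlocks_zero {R : Type*} [CommRing R]
    {A₁ : Matrix m m R} {A₂ : Matrix n n R} (h₁ : IsUnit A₁.det) (h₂ : IsUnit A₂.det)
    (Q₁₁ : Matrix m m R) (Q₁₂ : Matrix m n R) (Q₂₁ : Matrix n m R) (Q₂₂ Y : Matrix n n R) :
    fromBlocks A₁ 0 0 A₂ + fromBlocks Q₁₁ Q₁₂ Q₂₁ Q₂₂ * (fromBlocks A₁ 0 0 A₂)ᵀ⁻¹ *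
        fromBlocks 0 0 0 Y =
      fromBlocks A₁ (Q₁₂ * A₂ᵀ⁻¹ * Y) 0 (A₂ + Q₂₂ * A₂ᵀ⁻¹ * Y) := by
  have hinv : (fromBlocks A₁ 0 0 A₂)ᵀ⁻¹ = fromBlocks A₁ᵀ⁻¹ 0 0 A₂ᵀ⁻¹ := by
    rw [fromBlocks_transpose, transpose_zero, transpose_zero, inv_fromBlocks_zero₂₁_of_isUnit_iff]
    · simp
    · simp only [isUnit_iff_isUnit_det, det_transpose, h₁, h₂]
  rw [hinv, fromBlocks_multiply, fromBlocks_multiply, fromBlocks_add]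
  simp

end Matrix

section Stability

variable {m n : Type*} [Fintype m] [DecidableEq m] [Fintype n] [DecidableEq n]

theorem mem_spectrum_map_nonsing_inv_iff {A : Matrix m m ℝ} (hA : IsUnit A.det) {μ : ℂ} :
    μ ∈ spectrum ℂ (A⁻¹.map (algebraMap ℝ ℂ)) ↔ μ⁻¹ ∈ spectrum ℂ (A.map (algebraMap ℝ ℂ)) := by
  rw [map_nonsing_inv _ hA, spectrum_nonsing_inv ((isUnit_det_map_iff _ _).mpr hA), Set.mem_inv]

theorem Antistable.isUnit_det {A : Matrix m m ℝ} (hA : Antistable A) : IsUnit A.det := by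
  have h0 : (0 : ℂ) ∉ spectrum ℂ (A.map (algebraMap ℝ ℂ)) := fun h =>
    absurd (hA 0 h) (by simp)
  rwa [spectrum.zero_notMem_iff, isUnit_iff_isUnit_det, isUnit_det_map_iff] at h0

theorem Antistable.schurStable_inv {A : Matrix m m ℝ} (hA : Antistable A) :
    SchurStable A⁻¹ := by
  intro μ hμ
  have hinv := hA _ ((mem_spectrum_map_nonsing_inv_iff hA.isUnit_det).mp hμ)
  rw [norm_inv, one_lt_inv_iff₀] at hinv
  exact hinv.2

theorem SchurStable.antistable_inv {A : Matrix m m ℝ} (hdet : IsUnit A.det)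
    (hA : SchurStable A) : Antistable A⁻¹ := by
  intro μ hμ
  have hμ0 : μ ≠ 0 := by
    rintro rfl
    refine spectrum.zero_notMem ℂ ?_ hμ
    rw [isUnit_iff_isUnit_det, isUnit_det_map_iff]
    exact isUnit_nonsing_inv_det _ hdet
  have hinv := hA _ ((mem_spectrum_map_nonsing_inv_iff hdet).mp hμ)
  rwa [norm_inv, inv_lt_one₀ (norm_pos_iff.mpr hμ0)] at hinv

theorem SchurStable.transpose {A : Matrix m m ℝ} (hA : SchurStable A) : SchurStable Aᵀ := by
  intro μ hμ
  rw [transpose_map, spectrum_transpose] at hμ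
  exact hA μ hμ

theorem Antistable.conj {A : Matrix m m ℝ} (hA : Antistable A) {P : Matrix m m ℝ}
    (hP : IsUnit P.det) : Antistable (P * A * P⁻¹) := by
  intro μ hμ
  rw [Matrix.map_mul, Matrix.map_mul, map_nonsing_inv _ hP,
    spectrum_conj_nonsing_inv _ ((isUnit_det_map_iff _ _).mpr hP)] at hμ
  exact hA μ hμ

theorem Antistable.fromBlocks_zero₂₁ {A : Matrix m m ℝ} {D : Matrix n n ℝ} (hA : Antistable A)
    (hD : Antistable D) (B : Matrix m n ℝ) : Antistable (fromBlocks A B 0 D) := by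
  intro μ hμ
  rw [fromBlocks_map, Matrix.map_zero _ (map_zero _), spectrum_fromBlocks_zero₂₁] at hμ
  exact hμ.elim (hA μ) (hD μ)

end Stability

theorem ssc_weighting_matrix_antistable_general {nu ns : ℕ}
    (Au : Matrix (Fin nu) (Fin nu) ℝ)
    (As Qs PsInf : Matrix (Fin ns) (Fin ns) ℝ)
    (Qu : Matrix (Fin nu) (Fin nu) ℝ)
    (Q12 : Matrix (Fin nu) (Fin ns) ℝ)
    (hAu : Antistable Au) (hAs : IsUnit As.det) (hAsStable : SchurStable As)
    (hPsInf : PsInf.PosDef) (hLyap : PsInf = As * PsInf * Asᵀ + Qs) :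
    Antistable
      (fromBlocks Au 0 0 As +
        fromBlocks Qu Q12 Q12ᵀ Qs * ((fromBlocks Au 0 0 As)ᵀ)⁻¹ *
          fromBlocks 0 0 0 PsInf⁻¹) ∧
    SchurStable
      (fromBlocks Au 0 0 As +
        fromBlocks Qu Q12 Q12ᵀ Qs * ((fromBlocks Au 0 0 As)ᵀ)⁻¹ *
          fromBlocks 0 0 0 PsInf⁻¹)⁻¹ := by
  have hP : IsUnit PsInf.det := hPsInf.isUnit.map detMonoidHom
  have hAsT : IsUnit Asᵀ.det := by rwa [det_transpose]
  have hL : Antistable (fromBlocks Au 0 0 As +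
      fromBlocks Qu Q12 Q12ᵀ Qs * ((fromBlocks Au 0 0 As)ᵀ)⁻¹ * fromBlocks 0 0 0 PsInf⁻¹) := by
    rw [fromBlocks_add_mul_inv_transpose_mul_fromBlocks_zero hAu.isUnit_det hAs,
      add_mul_inv_transpose_mul_inv_eq_of_lyapunov hAs hP hLyap]
    exact hAu.fromBlocks_zero₂₁ ((hAsStable.transpose.antistable_inv hAsT).conj hP) _
  exact ⟨hL, hL.schurStable_inv⟩

/-- All eigenvalues of the State-Secrecy Code weighting matrix `L` have
modulus `> 1`; consequently `L⁻¹` has spectral radius `< 1`. -/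
theorem ssc_weighting_matrix_antistable {nu ns : ℕ}
    (Au : Matrix (Fin nu) (Fin nu) ℝ)
    (As Qs PsInf : Matrix (Fin ns) (Fin ns) ℝ)
    (Qu : Matrix (Fin nu) (Fin nu) ℝ)
    (Q12 : Matrix (Fin nu) (Fin ns) ℝ)
    (hAu : Antistable Au) (hAs : IsUnit As.det) (hAsStable : SchurStable As)
    (hQ : (fromBlocks Qu Q12 Q12ᵀ Qs).PosDef)
    (hQsymm : (fromBlocks Qu Q12 Q12ᵀ Qs).IsSymm)
    (hPsInf : PsInf.PosDef) (hLyap : PsInf = As * PsInf * Asᵀ + Qs) :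
    Antistable
      (fromBlocks Au 0 0 As +
        fromBlocks Qu Q12 Q12ᵀ Qs * ((fromBlocks Au 0 0 As)ᵀ)⁻¹ *
          fromBlocks 0 0 0 PsInf⁻¹) ∧
    SchurStable
      (fromBlocks Au 0 0 As +
        fromBlocks Qu Q12 Q12ᵀ Qs * ((fromBlocks Au 0 0 As)ᵀ)⁻¹ *
          fromBlocks 0 0 0 PsInf⁻¹)⁻¹ :=
  ssc_weighting_matrix_antistable_general Au As Qs PsInf Qu Q12 hAu hAs hAsStable hPsInf hLyap
end

section
/- With F = (A')^{-1}, W = Q^{-1}, A invertible, Q ≻ 0, and Y_∞ = diag(0, P_{s,∞}^{-1}) as above, define K_∞ = F Y_∞ F' (F Y_∞ F' + W)^{-1}. Then F - K_∞ F = [[(A_u')^{-1}, 0],[ -P_{s,∞}^{-1} Q_12' (A_u')^{-1}, P_{s,∞}^{-1} A_s P_{s,∞} ]], and its eigenvalues are those of A_u^{-1} together with those of A_s; in particular all eigenvalues of F - K_∞ F lie strictly inside the unit circle. -/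
open Matrix

open Polynomial

variable {n R K : Type*} [Fintype n] [DecidableEq n]

lemma my_charpoly_transpose [CommRing R] (M : Matrix n n R) : Mᵀ.charpoly = M.charpoly := by
  rw [Matrix.charpoly, Matrix.charpoly, ← Matrix.det_transpose (charmatrix M)]
  congr 1
  ext i j
  by_cases h : i = j
  · subst h; simp
  · simp [Matrix.charmatrix_apply_ne _ _ _ h, Matrix.charmatrix_apply_ne _ _ _ (Ne.symm h),
      Matrix.transpose_apply]

lemma my_mem_spectrum_iff [Field K] (M : Matrix n n K) (μ : K) :
    μ ∈ spectrum K M ↔ M.charpoly.IsRoot μ := by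
  rw [spectrum.mem_iff, Matrix.isUnit_iff_isUnit_det, isUnit_iff_ne_zero, not_ne_iff]
  have h : (algebraMap K (Matrix n n K)) μ - M = (charmatrix M).map (Polynomial.evalRingHom μ) := by
    ext i j
    by_cases hij : i = j
    · subst hij; simp [Matrix.algebraMap_matrix_apply]
    · simp [Matrix.algebraMap_matrix_apply, hij, Matrix.charmatrix_apply_ne _ _ _ hij]
  rw [h]
  have h2 : (M.charmatrix.map (evalRingHom μ)).det = eval μ M.charpoly := by
    rw [← RingHom.mapMatrix_apply, ← RingHom.map_det]; rfl
  rw [h2]; exact Iff.rfl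

lemma my_map_inv [CommRing R] [Field K] (f : R →+* K) (M : Matrix n n R) (h : IsUnit M.det) :
    (M⁻¹).map f = (M.map f)⁻¹ := by
  symm
  apply Matrix.inv_eq_right_inv
  rw [← Matrix.map_mul, Matrix.mul_nonsing_inv _ h]
  simp

lemma my_charpoly_conj [CommRing R] (P A : Matrix n n R) [Invertible P] :
    (P⁻¹ * A * P).charpoly = A.charpoly := by
  have hscal : ∀ M : Matrix n n R[X], (Matrix.scalar n (X : R[X])) * M = M * Matrix.scalar n X := by
    intro M
    ext i j
    simp [Matrix.scalar_apply, Matrix.diagonal_mul, Matrix.mul_diagonal, mul_comm]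
  have hmul : ∀ M N : Matrix n n R, (M * N).map (C : R → R[X]) =
      M.map (C : R → R[X]) * N.map (C : R → R[X]) := fun M N => Matrix.map_mul
  have hPP : (P⁻¹).map (C : R → R[X]) * P.map (C : R → R[X]) = 1 := by
    rw [← hmul, Matrix.nonsing_inv_mul _ (Matrix.isUnit_det_of_invertible P)]
    simp
  have key : charmatrix (P⁻¹ * A * P) =
      (P⁻¹).map (C : R → R[X]) * charmatrix A * P.map (C : R → R[X]) := by
    show Matrix.scalar n (X : R[X]) - (C : R →+* R[X]).mapMatrix (P⁻¹ * A * P) = _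
    rw [charmatrix]
    simp only [RingHom.mapMatrix_apply]
    rw [Matrix.mul_sub, Matrix.sub_mul, hmul, hmul]
    congr 1
    rw [← hscal, Matrix.mul_assoc, hPP, Matrix.mul_one]
  rw [Matrix.charpoly, key, Matrix.det_mul, Matrix.det_mul, Matrix.charpoly]
  have : ((P⁻¹).map (C : R → R[X])).det * (P.map (C : R → R[X])).det = 1 := by
    rw [← Matrix.det_mul, hPP, Matrix.det_one]
  calc ((P⁻¹).map (C : R → R[X])).det * (charmatrix A).det * (P.map (C : R → R[X])).det
      = ((P⁻¹).map (C : R → R[X])).det * (P.map (C : R → R[X])).det * (charmatrix A).det := by ring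
    _ = (charmatrix A).det := by rw [this, one_mul]


/-- Closed-loop matrix `F - K∞ F` of the open-loop information Riccati
recursion: block form, characteristic polynomial, and Schur stability. -/
theorem ssc_closed_loop_matrix {nu ns : ℕ}
    (Au : Matrix (Fin nu) (Fin nu) ℝ)
    (As Qs PsInf : Matrix (Fin ns) (Fin ns) ℝ)
    (Qu : Matrix (Fin nu) (Fin nu) ℝ)
    (Q12 : Matrix (Fin nu) (Fin ns) ℝ)
    (hAu : Antistable Au) (hAs : IsUnit As.det) (hAsStable : SchurStable As)
    (hQ : (fromBlocks Qu Q12 Q12ᵀ Qs).PosDef)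
    (hQsymm : (fromBlocks Qu Q12 Q12ᵀ Qs).IsSymm)
    (hPsInf : PsInf.PosDef) (hLyap : PsInf = As * PsInf * Asᵀ + Qs)
    (F W Yinf Kinf : Matrix (Fin nu ⊕ Fin ns) (Fin nu ⊕ Fin ns) ℝ)
    (hF : F = ((fromBlocks Au 0 0 As)ᵀ)⁻¹)
    (hW : W = (fromBlocks Qu Q12 Q12ᵀ Qs)⁻¹)
    (hYinf : Yinf = fromBlocks 0 0 0 PsInf⁻¹)
    (hKinf : Kinf = F * Yinf * Fᵀ * (F * Yinf * Fᵀ + W)⁻¹) :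
    F - Kinf * F =
      fromBlocks ((Auᵀ)⁻¹) 0 (-(PsInf⁻¹ * Q12ᵀ * (Auᵀ)⁻¹))
        (PsInf⁻¹ * As * PsInf) ∧
    (F - Kinf * F).charpoly = (Au⁻¹).charpoly * As.charpoly ∧
    SchurStable (F - Kinf * F) := by
  -- Au is invertible
  have hdetAu : IsUnit Au.det := by
    by_contra hdet
    have h0 : ¬ IsUnit (Au.map (algebraMap ℝ ℂ)) := by
      rw [Matrix.isUnit_iff_isUnit_det, ← RingHom.mapMatrix_apply, ← RingHom.map_det,
        isUnit_iff_ne_zero]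
      have : Au.det = 0 := by simpa [isUnit_iff_ne_zero] using hdet
      simp [this]
    have h1 := hAu 0 ((spectrum.zero_mem_iff (R := ℂ)).mpr h0)
    norm_num at h1
  haveI iAu : Invertible Au := Au.invertibleOfIsUnitDet hdetAu
  haveI iAs : Invertible As := As.invertibleOfIsUnitDet hAs
  haveI iPs : Invertible PsInf := PsInf.invertibleOfIsUnitDet (isUnit_iff_ne_zero.mpr hPsInf.det_pos.ne')
  haveI iQ : Invertible (fromBlocks Qu Q12 Q12ᵀ Qs) :=
    (fromBlocks Qu Q12 Q12ᵀ Qs).invertibleOfIsUnitDet (isUnit_iff_ne_zero.mpr hQ.det_pos.ne')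
  have hFval : F = fromBlocks (Auᵀ)⁻¹ 0 0 (Asᵀ)⁻¹ := by
    rw [hF, Matrix.fromBlocks_transpose]
    apply Matrix.inv_eq_right_inv
    simp [Matrix.fromBlocks_multiply, Matrix.mul_inv_of_invertible, ← Matrix.fromBlocks_one]
  have hFt : Fᵀ = fromBlocks Au⁻¹ 0 0 As⁻¹ := by
    rw [hFval, Matrix.fromBlocks_transpose]
    simp [Matrix.transpose_nonsing_inv]
  have hN : F * Yinf * Fᵀ = fromBlocks 0 0 0 ((Asᵀ)⁻¹ * PsInf⁻¹ * As⁻¹) := by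
    rw [hFval, hYinf, Matrix.fromBlocks_transpose]
    simp [Matrix.fromBlocks_multiply, Matrix.transpose_nonsing_inv, Matrix.mul_assoc]
  have hS1 : ((Asᵀ)⁻¹ * PsInf⁻¹ * As⁻¹) * (As * (PsInf * Asᵀ)) = 1 := by
    simp [Matrix.mul_assoc]
  have hQs : Qs = PsInf - As * PsInf * Asᵀ := eq_sub_of_add_eq' hLyap.symm
  have hSQ : (Asᵀ)⁻¹ * PsInf⁻¹ * As⁻¹ * Qs = (Asᵀ)⁻¹ * PsInf⁻¹ * As⁻¹ * PsInf - 1 := by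
    rw [hQs, Matrix.mul_sub, show As * PsInf * Asᵀ = As * (PsInf * Asᵀ) from Matrix.mul_assoc _ _ _,
      hS1]
  have hX : (fromBlocks ((Auᵀ)⁻¹) 0 (-(PsInf⁻¹ * Q12ᵀ * (Auᵀ)⁻¹)) (PsInf⁻¹ * As * PsInf)) *
      (fromBlocks Au 0 0 As)ᵀ =
      fromBlocks 1 0 (-(PsInf⁻¹ * Q12ᵀ)) (PsInf⁻¹ * As * PsInf * Asᵀ) := by
    rw [Matrix.fromBlocks_transpose]
    simp [Matrix.fromBlocks_multiply]
  have hMinv : (F * Yinf * Fᵀ + W) *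
      ((fromBlocks Qu Q12 Q12ᵀ Qs) *
        (fromBlocks 1 0 (-(PsInf⁻¹ * Q12ᵀ)) (PsInf⁻¹ * As * PsInf * Asᵀ))) = 1 := by
    rw [hN, hW, Matrix.add_mul, Matrix.inv_mul_cancel_left_of_invertible, ← Matrix.mul_assoc]
    simp only [Matrix.fromBlocks_multiply]
    simp only [Matrix.zero_mul, Matrix.mul_zero, zero_add, add_zero, Matrix.mul_one,
      Matrix.fromBlocks_add, ← Matrix.fromBlocks_one]
    rw [Matrix.fromBlocks_inj]
    refine ⟨rfl, rfl, ?_, ?_⟩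
    · rw [hSQ, Matrix.sub_mul]
      simp [Matrix.mul_assoc, Matrix.mul_neg]
    · rw [hSQ, Matrix.sub_mul]
      simp [Matrix.mul_assoc]
  set Qm := fromBlocks Qu Q12 Q12ᵀ Qs with hQmdef
  set X := fromBlocks (1 : Matrix (Fin nu) (Fin nu) ℝ) 0 (-(PsInf⁻¹ * Q12ᵀ))
    (PsInf⁻¹ * As * PsInf * Asᵀ) with hXdef
  set T := fromBlocks ((Auᵀ)⁻¹) 0 (-(PsInf⁻¹ * Q12ᵀ * (Auᵀ)⁻¹)) (PsInf⁻¹ * As * PsInf) with hTdef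
  have hAtF : (fromBlocks Au 0 0 As)ᵀ * F = 1 := by
    rw [hFval, Matrix.fromBlocks_transpose]
    simp [Matrix.fromBlocks_multiply, Matrix.mul_inv_of_invertible, ← Matrix.fromBlocks_one]
  have hMinvEq : (F * Yinf * Fᵀ + W)⁻¹ = Qm * X := Matrix.inv_eq_right_inv hMinv
  have hXF : X * F = T := by
    rw [← hX, Matrix.mul_assoc, hAtF, Matrix.mul_one]
  have hsplit : F * Yinf * Fᵀ * (Qm * X) * F + W * ((Qm * X) * F) = F := by
    rw [Matrix.mul_assoc (F * Yinf * Fᵀ) (Qm * X) F, ← Matrix.add_mul, ← Matrix.mul_assoc,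
      hMinv, Matrix.one_mul]
  have h1 : F - Kinf * F = T := by
    rw [hKinf, hMinvEq]
    calc F - F * Yinf * Fᵀ * (Qm * X) * F
        = (F * Yinf * Fᵀ * (Qm * X) * F + W * ((Qm * X) * F))
            - F * Yinf * Fᵀ * (Qm * X) * F := by rw [hsplit]
      _ = W * ((Qm * X) * F) := by abel
      _ = T := by
          rw [hW, Matrix.mul_assoc Qm X F,
            Matrix.inv_mul_cancel_left_of_invertible, hXF]
  have h2 : (F - Kinf * F).charpoly = (Au⁻¹).charpoly * As.charpoly := by
    rw [h1, hTdef, Matrix.charpoly_fromBlocks_zero₁₂]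
    congr 1
    · rw [← Matrix.transpose_nonsing_inv, my_charpoly_transpose]
    · exact my_charpoly_conj PsInf As
  refine ⟨h1, h2, ?_⟩
  intro μ hμ
  rw [my_mem_spectrum_iff, Matrix.charpoly_map, h2, Polynomial.map_mul] at hμ
  rw [Polynomial.IsRoot.def, Polynomial.eval_mul] at hμ
  rcases mul_eq_zero.mp hμ with h | h
  · have hUc : IsUnit (Au.map (algebraMap ℝ ℂ)) := by
      rw [Matrix.isUnit_iff_isUnit_det, ← RingHom.mapMatrix_apply, ← RingHom.map_det,
        isUnit_iff_ne_zero]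
      have hne : Au.det ≠ 0 := hdetAu.ne_zero
      simpa using hne
    have hmap : ((Au.map (algebraMap ℝ ℂ))⁻¹).charpoly = (Au⁻¹).charpoly.map (algebraMap ℝ ℂ) := by
      rw [← my_map_inv _ _ hdetAu, Matrix.charpoly_map]
    have hμ' : μ ∈ spectrum ℂ ((Au.map (algebraMap ℝ ℂ))⁻¹) := by
      rw [my_mem_spectrum_iff, hmap]; exact h
    have hμ0 : μ ≠ 0 := by
      rintro rfl
      exact (spectrum.zero_notMem_iff ℂ).mpr ((Matrix.isUnit_nonsing_inv_iff).mpr hUc) hμ'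
    obtain ⟨u, hu⟩ := hUc
    have hinv : (Au.map (algebraMap ℝ ℂ))⁻¹ = ↑u⁻¹ := by
      rw [Matrix.nonsing_inv_eq_ringInverse, ← hu, Ring.inverse_unit]
    have hmem : (↑((Units.mk0 μ hμ0)⁻¹) : ℂ) ∈ spectrum ℂ ((u : Matrix (Fin nu) (Fin nu) ℂ)) := by
      apply spectrum.inv_mem_iff.mpr
      rw [hinv] at hμ'
      simpa using hμ'
    have hgt : 1 < ‖μ⁻¹‖ := by
      apply hAu μ⁻¹
      rw [hu] at hmem
      simpa using hmem
    rw [norm_inv] at hgt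
    have hpos : 0 < ‖μ‖ := norm_pos_iff.mpr hμ0
    have h2' : ‖μ‖ * 1 < ‖μ‖ * ‖μ‖⁻¹ := mul_lt_mul_of_pos_left hgt hpos
    rw [mul_one, mul_inv_cancel₀ (ne_of_gt hpos)] at h2'
    exact h2'
  · exact hAsStable μ (by rw [my_mem_spectrum_iff, Matrix.charpoly_map]; exact h)
end
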